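/- Let ν be a Borel probability measure on the Riemann sphere ℂ_∞ = ℂ ∪ {∞} which is nonatomic and satisfies the self-similarity relation ν = Σ_{i∈Λ} pᵢ · φᵢν for a finite family of Möbius transformations (φᵢ)_{i∈Λ} and a positive probability vector (pᵢ). Let s := sup{ν(C) : C a generalized circle} and Q := {C generalized circle : ν(C) = s}. If s > 0, then Q is a nonempty finite set, and for every C ∈ Q and every i ∈ Λ, φᵢ⁻¹(C) ∈ Q. In particular, if no finite nonempty set Q of generalized circles satisfies φᵢ(C) ∈ Q for all i ∈ Λ, C ∈ Q, then ν(C) = 0 for every generalized circle C. -/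

import Mathlib

open MeasureTheory OnePoint
open scoped ENNReal BigOperators

noncomputable section

instance : MeasurableSpace (OnePoint ℂ) := borel _
instance : BorelSpace (OnePoint ℂ) := ⟨rfl⟩

/-- The Möbius transformation of ℂ ∪ {∞} induced by a matrix g = [[a,b],[c,d]]. -/
def moeb (g : Matrix (Fin 2) (Fin 2) ℂ) (z : OnePoint ℂ) : OnePoint ℂ :=
  Option.casesOn z
    (if g 1 0 = 0 then ∞ else ((g 0 0 / g 1 0 : ℂ) : OnePoint ℂ))
    (fun w => if g 1 0 * w + g 1 1 = 0 then ∞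
      else (((g 0 0 * w + g 0 1) / (g 1 0 * w + g 1 1) : ℂ) : OnePoint ℂ))

/-- A generalized circle in ℂ ∪ {∞}: either a Euclidean circle, or a line together
with the point at infinity. -/
def IsGenCircle (C : Set (OnePoint ℂ)) : Prop :=
  (∃ (z₀ : ℂ) (r : ℝ), 0 < r ∧
    C = (fun z : ℂ => (z : OnePoint ℂ)) '' {z : ℂ | ‖z - z₀‖ = r}) ∨
  (∃ z₀ z₁ : ℂ, z₁ ≠ 0 ∧
    C = (fun z : ℂ => (z : OnePoint ℂ)) '' {z : ℂ | ∃ t : ℝ, z = z₀ + t * z₁} ∪ {OnePoint.infty})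

/-!
Generalized circles are exactly the zero sets `{[u : v] | H(u, v) = 0}` of indefinite Hermitian
forms `H` in homogeneous coordinates, and a Möbius map `M` pulls `H` back to `H ∘ M`, so preimages
of generalized circles under Möbius maps are generalized circles. Two distinct generalized circles
meet in a countable set (send a common point to `∞`: they become two distinct lines), hence in a
`ν`-null set. Therefore only finitely many circles have mass `≥ ε` for each `ε > 0`, so a positive
supremum `s` is attained and the family `Q` of maximizers is finite. Stationarity writes `ν C` as
the convex combination `∑ pᵢ ν (φᵢ⁻¹ C)` of masses `≤ s`, so `C ∈ Q` forces `φᵢ⁻¹ C ∈ Q`. Finally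
`C ↦ φᵢ⁻¹ C` is injective on the finite set `Q`, hence onto, which makes `Q` forward invariant.
-/

open Matrix Complex ComplexConjugate

lemma ENNReal.eq_of_sum_mul_eq {ι : Type*} [Fintype ι] {w x : ι → ℝ≥0∞} {s : ℝ≥0∞}
    (hw : ∀ i, w i ≠ 0) (hw1 : ∑ i, w i = 1) (hs : s ≠ ⊤) (hx : ∀ i, x i ≤ s)
    (hsum : ∑ i, w i * x i = s) (i : ι) : x i = s := by
  classical
  have hwtop : ∀ j, w j ≠ ⊤ := fun j => ne_top_of_le_ne_top ENNReal.one_ne_top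
    (hw1 ▸ Finset.single_le_sum (fun _ _ => zero_le) (Finset.mem_univ j))
  refine (hx i).antisymm (not_lt.1 fun hlt => ?_)
  have hlt_sum : ∑ j, w j * x j < ∑ j, w j * s := by
    rw [← Finset.add_sum_erase _ _ (Finset.mem_univ i),
      ← Finset.add_sum_erase _ _ (Finset.mem_univ i)]
    exact ENNReal.add_lt_add_of_lt_of_le
      (ENNReal.sum_ne_top.2 fun j _ =>
        ENNReal.mul_ne_top (hwtop j) (ne_top_of_le_ne_top hs (hx j)))
      (ENNReal.mul_lt_mul_right (hw i) (hwtop i) hlt)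
      (Finset.sum_le_sum fun j _ => mul_le_mul_right (hx j) _)
  rw [hsum, ← Finset.sum_mul, hw1, one_mul] at hlt_sum
  exact lt_irrefl s hlt_sum

def maxMassSets {α : Type*} [MeasurableSpace α] (μ : Measure α) (𝒞 : Set (Set α)) :
    Set (Set α) :=
  {C ∈ 𝒞 | μ C = sSup (μ '' 𝒞)}

section MaximalMass

variable {α : Type*} [MeasurableSpace α] {μ : Measure α} [IsFiniteMeasure μ] {𝒞 : Set (Set α)}

lemma finite_setOf_le_measure (h𝒞m : ∀ C ∈ 𝒞, MeasurableSet C)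
    (h𝒞 : 𝒞.Pairwise fun C D => μ (C ∩ D) = 0) {ε : ℝ≥0∞} (hε : 0 < ε) :
    {C ∈ 𝒞 | ε ≤ μ C}.Finite := by
  have hfin := Measure.finite_const_le_meas_of_disjoint_iUnion₀ μ hε (As := ((↑) : 𝒞 → Set α))
    (fun C => (h𝒞m C C.2).nullMeasurableSet)
    (fun C D hCD => h𝒞 C.2 D.2 (Subtype.coe_ne_coe.2 hCD)) (measure_ne_top _ _)
  convert hfin.image ((↑) : 𝒞 → Set α)
  ext C
  simp [and_comm]

lemma maxMassSets_nonempty (h𝒞m : ∀ C ∈ 𝒞, MeasurableSet C)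
    (h𝒞 : 𝒞.Pairwise fun C D => μ (C ∩ D) = 0) (hpos : 0 < sSup (μ '' 𝒞)) :
    (maxMassSets μ 𝒞).Nonempty := by
  set s := sSup (μ '' 𝒞)
  have hs : s ≠ ⊤ := ne_top_of_le_ne_top (measure_ne_top μ Set.univ)
    (sSup_le <| by rintro _ ⟨C, -, rfl⟩; exact measure_mono (Set.subset_univ C))
  obtain ⟨_, ⟨C₀, hC₀, rfl⟩, hC₀s⟩ := lt_sSup_iff.1 (ENNReal.half_lt_self hpos.ne' hs)
  obtain ⟨C, ⟨hC, hCs⟩, hmax⟩ := Set.exists_max_image _ μ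
    (finite_setOf_le_measure h𝒞m h𝒞 (ENNReal.half_pos hpos.ne')) ⟨C₀, hC₀, hC₀s.le⟩
  refine ⟨C, hC, le_antisymm (le_sSup ⟨C, hC, rfl⟩) (sSup_le ?_)⟩
  rintro _ ⟨D, hD, rfl⟩
  by_cases hD' : s / 2 ≤ μ D
  · exact hmax D ⟨hD, hD'⟩
  · exact (not_le.1 hD').le.trans hCs

lemma maxMassSets_finite (h𝒞m : ∀ C ∈ 𝒞, MeasurableSet C)
    (h𝒞 : 𝒞.Pairwise fun C D => μ (C ∩ D) = 0) (hpos : 0 < sSup (μ '' 𝒞)) :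
    (maxMassSets μ 𝒞).Finite :=
  (finite_setOf_le_measure h𝒞m h𝒞 hpos).subset fun _ hC => ⟨hC.1, hC.2.ge⟩

lemma preimage_mem_maxMassSets {ι : Type*} [Fintype ι] {φ : ι → α → α}
    {w : ι → ℝ≥0∞} (hφ : ∀ i, Measurable (φ i)) (hw : ∀ i, w i ≠ 0) (hw1 : ∑ i, w i = 1)
    (hμ : μ = ∑ i, w i • μ.map (φ i)) (h𝒞m : ∀ C ∈ 𝒞, MeasurableSet C)
    (h𝒞φ : ∀ i, ∀ C ∈ 𝒞, φ i ⁻¹' C ∈ 𝒞) {C : Set α} (hC : C ∈ maxMassSets μ 𝒞) (i : ι) :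
    φ i ⁻¹' C ∈ maxMassSets μ 𝒞 := by
  obtain ⟨hC𝒞, hCs⟩ := hC
  refine ⟨h𝒞φ i C hC𝒞, ?_⟩
  rw [← hCs]
  refine ENNReal.eq_of_sum_mul_eq (x := fun j => μ (φ j ⁻¹' C)) hw hw1 (measure_ne_top μ C)
    (fun j => hCs ▸ le_sSup ⟨_, h𝒞φ j C hC𝒞, rfl⟩) ?_ i
  conv_rhs => rw [hμ]
  simp [Measure.map_apply (hφ _) (h𝒞m C hC𝒞)]

end MaximalMass

lemma Set.Finite.image_mem_of_preimage_mem {α : Type*} {f : α → α}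
    (hf : Function.Surjective f) {Q : Set (Set α)} (hQ : Q.Finite)
    (hpre : ∀ C ∈ Q, f ⁻¹' C ∈ Q) {C : Set α} (hC : C ∈ Q) : f '' C ∈ Q := by
  have hbij : Set.BijOn (Set.preimage f) Q Q :=
    (hQ.injOn_iff_bijOn_of_mapsTo hpre).1 (Set.preimage_injective.2 hf).injOn
  obtain ⟨D, hD, rfl⟩ := hbij.surjOn hC
  rwa [Set.image_preimage_eq D hf]

lemma moeb_infty (M : Matrix (Fin 2) (Fin 2) ℂ) :
    moeb M ∞ = if M 1 0 = 0 then (∞ : OnePoint ℂ) else ((M 0 0 / M 1 0 : ℂ) : OnePoint ℂ) := rfl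

lemma moeb_coe (M : Matrix (Fin 2) (Fin 2) ℂ) (w : ℂ) :
    moeb M w = if M 1 0 * w + M 1 1 = 0 then (∞ : OnePoint ℂ)
      else (((M 0 0 * w + M 0 1) / (M 1 0 * w + M 1 1) : ℂ) : OnePoint ℂ) := rfl

def homCoord : OnePoint ℂ → Fin 2 → ℂ
  | ∞ => ![1, 0]
  | (z : ℂ) => ![z, 1]

@[simp] lemma homCoord_infty : homCoord (∞ : OnePoint ℂ) = ![1, 0] := rfl
@[simp] lemma homCoord_coe (z : ℂ) : homCoord z = ![z, 1] := rfl

lemma eq_of_homCoord_eq_smul {x y : OnePoint ℂ} {μ : ℂ} (h : homCoord x = μ • homCoord y) :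
    x = y := by
  induction x <;> induction y <;> aesop (add simp [funext_iff, Fin.forall_fin_two])

lemma homCoord_moeb {M : Matrix (Fin 2) (Fin 2) ℂ} (hM : M.det ≠ 0) (x : OnePoint ℂ) :
    ∃ c : ℂ, c ≠ 0 ∧ homCoord (moeb M x) = c • M *ᵥ homCoord x := by
  rw [det_fin_two] at hM
  induction x with
  | infty =>
    by_cases hc : M 1 0 = 0
    · have ha : M 0 0 ≠ 0 := by rintro h; simp [h, hc] at hM
      refine ⟨(M 0 0)⁻¹, inv_ne_zero ha, ?_⟩
      ext i; fin_cases i <;> simp [moeb_infty, hc, ha]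
    · refine ⟨(M 1 0)⁻¹, inv_ne_zero hc, ?_⟩
      ext i; fin_cases i <;> simp [moeb_infty, hc, div_eq_inv_mul]
  | coe w =>
    by_cases hc : M 1 0 * w + M 1 1 = 0
    · have ha : M 0 0 * w + M 0 1 ≠ 0 := by
        intro ha; apply hM; linear_combination M 0 0 * hc - M 1 0 * ha
      refine ⟨(M 0 0 * w + M 0 1)⁻¹, inv_ne_zero ha, ?_⟩
      ext i; fin_cases i <;> simp [moeb_coe, hc, ha]
    · refine ⟨(M 1 0 * w + M 1 1)⁻¹, inv_ne_zero hc, ?_⟩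
      ext i; fin_cases i <;> simp [moeb_coe, hc, div_eq_inv_mul]

lemma moeb_moeb_of_mul_eq_one {M N : Matrix (Fin 2) (Fin 2) ℂ} (h : M * N = 1)
    (x : OnePoint ℂ) : moeb M (moeb N x) = x := by
  have hdet : M.det * N.det = 1 := by rw [← det_mul, h, det_one]
  obtain ⟨c, -, hc⟩ := homCoord_moeb (left_ne_zero_of_mul_eq_one hdet) (moeb N x)
  obtain ⟨d, -, hd⟩ := homCoord_moeb (right_ne_zero_of_mul_eq_one hdet) x
  apply eq_of_homCoord_eq_smul (μ := c * d)
  rw [hc, hd, mulVec_smul, mulVec_mulVec, h, one_mulVec, smul_smul]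

lemma moeb_surjective {M : Matrix (Fin 2) (Fin 2) ℂ} (hM : M.det ≠ 0) :
    Function.Surjective (moeb M) :=
  fun x => ⟨moeb M⁻¹ x, moeb_moeb_of_mul_eq_one (mul_nonsing_inv M (isUnit_iff_ne_zero.2 hM)) x⟩

def hermZeroSet (A : Matrix (Fin 2) (Fin 2) ℂ) : Set (OnePoint ℂ) :=
  {x | star (homCoord x) ⬝ᵥ A *ᵥ homCoord x = 0}

lemma mem_hermZeroSet {A : Matrix (Fin 2) (Fin 2) ℂ} {x : OnePoint ℂ} :
    x ∈ hermZeroSet A ↔ star (homCoord x) ⬝ᵥ A *ᵥ homCoord x = 0 := Iff.rfl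

lemma star_dotProduct_mulVec_smul {n R : Type*} [Fintype n] [CommSemiring R] [StarRing R]
    (A : Matrix n n R) (c : R) (v : n → R) :
    star (c • v) ⬝ᵥ A *ᵥ (c • v) = (star c * c) * (star v ⬝ᵥ A *ᵥ v) := by
  rw [star_smul, mulVec_smul, smul_dotProduct, dotProduct_smul, smul_eq_mul, smul_eq_mul]
  ring

lemma star_dotProduct_mulVec_mulVec {n R : Type*} [Fintype n] [CommSemiring R] [StarRing R]
    (A M : Matrix n n R) (v : n → R) :
    star (M *ᵥ v) ⬝ᵥ A *ᵥ (M *ᵥ v) = star v ⬝ᵥ (Mᴴ * A * M) *ᵥ v := by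
  rw [star_mulVec, ← dotProduct_mulVec, mulVec_mulVec, mulVec_mulVec, Matrix.mul_assoc]

lemma preimage_moeb_hermZeroSet {M : Matrix (Fin 2) (Fin 2) ℂ} (hM : M.det ≠ 0)
    (A : Matrix (Fin 2) (Fin 2) ℂ) : moeb M ⁻¹' hermZeroSet A = hermZeroSet (Mᴴ * A * M) := by
  ext x
  obtain ⟨c, hc, hx⟩ := homCoord_moeb hM x
  have hc' : star c * c ≠ 0 := mul_ne_zero (star_ne_zero.2 hc) hc
  rw [Set.mem_preimage, mem_hermZeroSet, mem_hermZeroSet, hx,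
    star_dotProduct_mulVec_smul, star_dotProduct_mulVec_mulVec, mul_eq_zero, or_iff_right hc']

def circleMatrix (α : ℝ) (β : ℂ) (γ : ℝ) : Matrix (Fin 2) (Fin 2) ℂ :=
  !![(α : ℂ), conj β; β, (γ : ℂ)]

section circleMatrix

variable {α γ : ℝ} {β : ℂ}

lemma isHermitian_circleMatrix : (circleMatrix α β γ).IsHermitian := by
  ext i j; fin_cases i <;> fin_cases j <;> simp [circleMatrix]

lemma det_circleMatrix : (circleMatrix α β γ).det = ((α * γ - normSq β : ℝ) : ℂ) := by
  rw [circleMatrix, det_fin_two_of]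
  push_cast [normSq_eq_conj_mul_self]
  ring

lemma Matrix.IsHermitian.eq_circleMatrix {A : Matrix (Fin 2) (Fin 2) ℂ} (hA : A.IsHermitian) :
    A = circleMatrix (A 0 0).re (A 1 0) (A 1 1).re := by
  have hre : ∀ i, ((A i i).re : ℂ) = A i i := fun i => conj_eq_iff_re.1 (hA.apply i i)
  ext i j; fin_cases i <;> fin_cases j <;> simp [circleMatrix, hre, ← hA.apply 0 1]

lemma coe_mem_hermZeroSet_circleMatrix {z : ℂ} :
    (z : OnePoint ℂ) ∈ hermZeroSet (circleMatrix α β γ) ↔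
      α * normSq z + 2 * (β * z).re + γ = 0 := by
  have key : star ![z, 1] ⬝ᵥ circleMatrix α β γ *ᵥ ![z, 1] =
      ((α * normSq z + 2 * (β * z).re + γ : ℝ) : ℂ) := by
    apply Complex.ext <;>
      simp [circleMatrix, dotProduct, Fin.sum_univ_two, normSq_apply] <;> ring
  rw [mem_hermZeroSet, homCoord_coe, key, ofReal_eq_zero]

lemma infty_mem_hermZeroSet_circleMatrix :
    (∞ : OnePoint ℂ) ∈ hermZeroSet (circleMatrix α β γ) ↔ α = 0 := by
  simp [mem_hermZeroSet, circleMatrix]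

lemma hermZeroSet_smul {A : Matrix (Fin 2) (Fin 2) ℂ} {c : ℂ} (hc : c ≠ 0) :
    hermZeroSet (c • A) = hermZeroSet A := by
  ext x
  rw [mem_hermZeroSet, mem_hermZeroSet, smul_mulVec, dotProduct_smul, smul_eq_mul,
    mul_eq_zero, or_iff_right hc]

lemma circleMatrix_eq_smul (hα : α ≠ 0) :
    circleMatrix α β γ = (α : ℂ) • circleMatrix 1 (β / α) (γ / α) := by
  have : (α : ℂ) ≠ 0 := by exact_mod_cast hα
  ext i j; fin_cases i <;> fin_cases j <;> simp [circleMatrix, mul_div_cancel₀ _ this]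

end circleMatrix

def realLine (z₀ z₁ : ℂ) : Set ℂ :=
  {z | ∃ t : ℝ, z = z₀ + t * z₁}

lemma mem_realLine_iff {z z₀ z₁ : ℂ} (hz₁ : z₁ ≠ 0) :
    z ∈ realLine z₀ z₁ ↔ (conj z₁ * (z - z₀)).im = 0 := by
  constructor
  · rintro ⟨t, rfl⟩
    simp [mul_im]
    ring
  · intro h
    have hw : ((conj z₁ * (z - z₀)).re : ℂ) = conj z₁ * (z - z₀) :=
      Complex.ext (by simp) (by simp [h])
    have hc : conj z₁ ≠ 0 := (map_ne_zero _).2 hz₁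
    refine ⟨(conj z₁ * (z - z₀)).re / normSq z₁, ?_⟩
    rw [ofReal_div, hw, normSq_eq_conj_mul_self]
    field_simp
    ring

lemma image_coe_sphere_eq_hermZeroSet (c : ℂ) {r : ℝ} (hr : 0 ≤ r) :
    ((↑) : ℂ → OnePoint ℂ) '' {z : ℂ | ‖z - c‖ = r} =
      hermZeroSet (circleMatrix 1 (-conj c) (normSq c - r ^ 2)) := by
  ext x
  induction x with
  | infty => simp [infty_mem_hermZeroSet_circleMatrix]
  | coe z =>
    have key : 1 * normSq z + 2 * (-conj c * z).re + (normSq c - r ^ 2) =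
        normSq (z - c) - r ^ 2 := by
      simp [normSq_apply]
      ring
    rw [OnePoint.coe_injective.mem_set_image, coe_mem_hermZeroSet_circleMatrix, key, sub_eq_zero,
      Set.mem_ofPred_eq, ← sq_eq_sq₀ (norm_nonneg _) hr, Complex.sq_norm]

lemma image_coe_line_union_infty_eq_hermZeroSet (z₀ : ℂ) {z₁ : ℂ} (hz₁ : z₁ ≠ 0) :
    ((↑) : ℂ → OnePoint ℂ) '' realLine z₀ z₁ ∪ {(∞ : OnePoint ℂ)} =
      hermZeroSet (circleMatrix 0 (I * conj z₁) (-2 * (I * conj z₁ * z₀).re)) := by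
  ext x
  induction x with
  | infty => simp [infty_mem_hermZeroSet_circleMatrix]
  | coe z =>
    have key : 0 * normSq z + 2 * (I * conj z₁ * z).re + -2 * (I * conj z₁ * z₀).re =
        -2 * (conj z₁ * (z - z₀)).im := by
      simp [mul_re, mul_im]
      ring
    rw [Set.mem_union, OnePoint.coe_injective.mem_set_image, coe_mem_hermZeroSet_circleMatrix, key,
      mem_realLine_iff hz₁, mul_eq_zero, or_iff_right (by norm_num : (-2 : ℝ) ≠ 0)]
    simp

lemma isGenCircle_hermZeroSet_circleMatrix {α γ : ℝ} {β : ℂ} (h : α * γ < normSq β) :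
    IsGenCircle (hermZeroSet (circleMatrix α β γ)) := by
  by_cases hα : α = 0
  · subst hα
    have hβ : β ≠ 0 := by rintro rfl; simp at h
    have hI : I * conj (I * conj β) = β := by simp [← mul_assoc]
    right
    -- a point with `2 Re (β z) + γ = 0`, and the direction `i β̄` along which `Re (β z)` is fixed
    refine ⟨-(γ / (2 * normSq β)) * conj β, I * conj β, by simp [hβ], ?_⟩
    have h₀ : β * (-(γ / (2 * normSq β)) * conj β) = ((-γ / 2 : ℝ) : ℂ) := by
      have : (normSq β : ℂ) ≠ 0 := ofReal_ne_zero.2 (normSq_pos.2 hβ).ne'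
      rw [mul_left_comm, mul_conj]
      push_cast
      field_simp
    refine ((image_coe_line_union_infty_eq_hermZeroSet _ (by simp [hβ])).trans ?_).symm
    rw [hI, h₀, ofReal_re]
    congr 2
    ring
  · left
    -- normalise to `α = 1` and complete the square
    rw [circleMatrix_eq_smul hα, hermZeroSet_smul (ofReal_ne_zero.2 hα)]
    have hr : 0 < normSq (β / α) - γ / α := by
      have : normSq (β / α) - γ / α = (normSq β - α * γ) / (α * α) := by
        rw [normSq_div, normSq_ofReal]
        field_simp
      rw [this]
      exact div_pos (by linarith) (mul_self_pos.2 hα)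
    refine ⟨-conj (β / α), √(normSq (β / α) - γ / α), Real.sqrt_pos.2 hr, ?_⟩
    rw [image_coe_sphere_eq_hermZeroSet _ (Real.sqrt_nonneg _), Real.sq_sqrt hr.le]
    simp

lemma isGenCircle_iff_exists_isHermitian {C : Set (OnePoint ℂ)} :
    IsGenCircle C ↔
      ∃ A : Matrix (Fin 2) (Fin 2) ℂ, A.IsHermitian ∧ A.det.re < 0 ∧ C = hermZeroSet A := by
  constructor
  · rintro (⟨c, r, hr, rfl⟩ | ⟨z₀, z₁, hz₁, rfl⟩)
    · refine ⟨_, isHermitian_circleMatrix, ?_, image_coe_sphere_eq_hermZeroSet c hr.le⟩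
      rw [det_circleMatrix, ofReal_re, normSq_neg, normSq_conj]
      nlinarith
    · refine ⟨_, isHermitian_circleMatrix, ?_, image_coe_line_union_infty_eq_hermZeroSet z₀ hz₁⟩
      rw [det_circleMatrix, ofReal_re, zero_mul, zero_sub, neg_lt_zero]
      exact normSq_pos.2 (by simp [hz₁])
  · rintro ⟨A, hA, hdet, rfl⟩
    rw [hA.eq_circleMatrix] at hdet ⊢
    rw [det_circleMatrix, ofReal_re, sub_neg] at hdet
    exact isGenCircle_hermZeroSet_circleMatrix hdet

lemma IsGenCircle.preimage_moeb {M : Matrix (Fin 2) (Fin 2) ℂ} (hM : M.det ≠ 0)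
    {C : Set (OnePoint ℂ)} (hC : IsGenCircle C) : IsGenCircle (moeb M ⁻¹' C) := by
  obtain ⟨A, hA, hdet, rfl⟩ := isGenCircle_iff_exists_isHermitian.1 hC
  refine isGenCircle_iff_exists_isHermitian.2 ⟨Mᴴ * A * M,
    isHermitian_conjTranspose_mul_mul M hA, ?_, preimage_moeb_hermZeroSet hM A⟩
  rw [det_mul, det_mul, det_conjTranspose, mul_right_comm, star_def,
    ← normSq_eq_conj_mul_self, re_ofReal_mul]
  exact mul_neg_of_pos_of_neg (normSq_pos.2 hM) hdet

lemma line_eq_of_mem_of_mem {z₀ z₁ x y : ℂ} (hxy : x ≠ y)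
    (hx : x ∈ realLine z₀ z₁) (hy : y ∈ realLine z₀ z₁) :
    realLine z₀ z₁ = realLine x (y - x) := by
  obtain ⟨a, rfl⟩ := hx
  obtain ⟨b, rfl⟩ := hy
  have hab : (b : ℂ) - a ≠ 0 := sub_ne_zero.2 fun h => hxy (by rw [h])
  ext z
  constructor
  · rintro ⟨t, rfl⟩
    refine ⟨(t - a) / (b - a), ?_⟩
    push_cast
    field_simp
    ring
  · rintro ⟨s, rfl⟩
    exact ⟨a + s * (b - a), by push_cast; ring⟩

lemma line_inter_line_subsingleton {z₀ z₁ w₀ w₁ : ℂ}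
    (hne : realLine z₀ z₁ ≠ realLine w₀ w₁) :
    (realLine z₀ z₁ ∩ realLine w₀ w₁).Subsingleton := by
  intro x hx y hy
  by_contra hxy
  exact hne (by rw [line_eq_of_mem_of_mem hxy hx.1 hy.1, line_eq_of_mem_of_mem hxy hx.2 hy.2])

lemma exists_moeb_infty_eq (x : OnePoint ℂ) :
    ∃ M : Matrix (Fin 2) (Fin 2) ℂ, M.det ≠ 0 ∧ moeb M (∞ : OnePoint ℂ) = x := by
  induction x with
  | infty => exact ⟨1, by simp, by simp [moeb_infty]⟩
  | coe w => exact ⟨!![w, 1; 1, 0], by simp [det_fin_two_of], by simp [moeb_infty]⟩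

lemma IsGenCircle.exists_eq_line_of_infty_mem {C : Set (OnePoint ℂ)} (hC : IsGenCircle C)
    (h : (∞ : OnePoint ℂ) ∈ C) : ∃ z₀ z₁ : ℂ,
      C = ((↑) : ℂ → OnePoint ℂ) '' realLine z₀ z₁ ∪ {(∞ : OnePoint ℂ)} := by
  rcases hC with ⟨c, r, -, rfl⟩ | ⟨z₀, z₁, -, rfl⟩
  · exact absurd h OnePoint.infty_notMem_image_coe
  · exact ⟨z₀, z₁, rfl⟩

lemma IsGenCircle.inter_countable {C₁ C₂ : Set (OnePoint ℂ)} (h₁ : IsGenCircle C₁)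
    (h₂ : IsGenCircle C₂) (hne : C₁ ≠ C₂) : (C₁ ∩ C₂).Countable := by
  obtain h | ⟨x, hx₁, hx₂⟩ := (C₁ ∩ C₂).eq_empty_or_nonempty
  · simp [h]
  obtain ⟨M, hM, hMx⟩ := exists_moeb_infty_eq x
  have hsurj := moeb_surjective hM
  obtain ⟨z₀, z₁, e₁⟩ :=
    (h₁.preimage_moeb hM).exists_eq_line_of_infty_mem (by rwa [Set.mem_preimage, hMx])
  obtain ⟨w₀, w₁, e₂⟩ :=
    (h₂.preimage_moeb hM).exists_eq_line_of_infty_mem (by rwa [Set.mem_preimage, hMx])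
  have hL : realLine z₀ z₁ ≠ realLine w₀ w₁ := by
    intro hL
    apply hne
    rw [← hsurj.image_preimage C₁, ← hsurj.image_preimage C₂, e₁, e₂, hL]
  rw [← hsurj.image_preimage (C₁ ∩ C₂), Set.preimage_inter, e₁, e₂,
    ← Set.inter_union_distrib_right, ← Set.image_inter OnePoint.coe_injective]
  exact (((line_inter_line_subsingleton hL).countable.image _).union
    (Set.countable_singleton _)).image _

lemma measurable_of_measurable_comp_coe {β : Type*} [MeasurableSpace β] {f : OnePoint ℂ → β}
    (hf : Measurable (f ∘ ((↑) : ℂ → OnePoint ℂ))) : Measurable f := by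
  intro T hT
  have hsplit : f ⁻¹' T =
      ((↑) : ℂ → OnePoint ℂ) '' ((f ∘ (↑)) ⁻¹' T) ∪ (f ⁻¹' T ∩ {(∞ : OnePoint ℂ)}) := by
    ext x
    induction x <;> simp
  rw [hsplit]
  exact (OnePoint.isOpenEmbedding_coe.measurableEmbedding.measurableSet_image.2 (hf hT)).union
    (Set.subsingleton_singleton.anti Set.inter_subset_right).measurableSet

lemma measurable_moeb (M : Matrix (Fin 2) (Fin 2) ℂ) : Measurable (moeb M) := by
  refine measurable_of_measurable_comp_coe (Measurable.ite ?_ measurable_const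
    (OnePoint.continuous_coe.measurable.comp (by fun_prop)))
  exact measurableSet_eq_fun (by fun_prop) measurable_const

lemma measurable_homCoord : Measurable homCoord :=
  measurable_of_measurable_comp_coe (f := homCoord) (by
    change Measurable fun z : ℂ => ![z, 1]
    fun_prop)

lemma measurableSet_hermZeroSet (A : Matrix (Fin 2) (Fin 2) ℂ) :
    MeasurableSet (hermZeroSet A) := by
  have : Continuous fun v : Fin 2 → ℂ => star v ⬝ᵥ A *ᵥ v := by fun_prop
  exact measurableSet_eq_fun (this.measurable.comp measurable_homCoord) measurable_const

lemma IsGenCircle.measurableSet {C : Set (OnePoint ℂ)} (hC : IsGenCircle C) :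
    MeasurableSet C := by
  obtain ⟨A, -, -, rfl⟩ := isGenCircle_iff_exists_isHermitian.1 hC
  exact measurableSet_hermZeroSet A

theorem stmt_17_general {Λ : Type} [Fintype Λ]
    (g : Λ → Matrix.SpecialLinearGroup (Fin 2) ℂ)
    (p : Λ → ℝ) (hp : ∀ i, 0 < p i) (hp1 : ∑ i, p i = 1)
    (ν : Measure (OnePoint ℂ)) [IsProbabilityMeasure ν]
    (hna : ∀ x : OnePoint ℂ, ν {x} = 0)
    (hstat : ν = ∑ i, ENNReal.ofReal (p i) •
      Measure.map (moeb (↑(g i) : Matrix (Fin 2) (Fin 2) ℂ)) ν) :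
    ∀ (s : ℝ≥0∞) (Q : Set (Set (OnePoint ℂ))),
      s = sSup {r : ℝ≥0∞ | ∃ C : Set (OnePoint ℂ), IsGenCircle C ∧ r = ν C} →
      Q = {C | IsGenCircle C ∧ ν C = s} →
      ((0 < s → Q.Nonempty ∧ Q.Finite ∧
        ∀ C ∈ Q, ∀ i : Λ, (moeb (↑(g i) : Matrix (Fin 2) (Fin 2) ℂ)) ⁻¹' C ∈ Q) ∧
      ((¬ ∃ Q' : Set (Set (OnePoint ℂ)), Q'.Finite ∧ Q'.Nonempty ∧
          (∀ C ∈ Q', IsGenCircle C) ∧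
          ∀ i : Λ, ∀ C ∈ Q', (moeb (↑(g i) : Matrix (Fin 2) (Fin 2) ℂ)) '' C ∈ Q') →
        ∀ C : Set (OnePoint ℂ), IsGenCircle C → ν C = 0)) := by
  intro s Q hs hQ
  have : NullSingletonClass ν := ⟨hna⟩
  have hdet : ∀ i, (↑(g i) : Matrix (Fin 2) (Fin 2) ℂ).det ≠ 0 := fun i => by simp
  have hw1 : ∑ i, ENNReal.ofReal (p i) = 1 := by
    rw [← ENNReal.ofReal_sum_of_nonneg fun i _ => (hp i).le, hp1, ENNReal.ofReal_one]
  have hs' : s = sSup (ν '' {C | IsGenCircle C}) := by simp [hs, Set.image, eq_comm]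
  have hQ' : Q = maxMassSets ν {C | IsGenCircle C} := by rw [hQ, hs']; rfl
  have hmeas : ∀ C ∈ {C | IsGenCircle C}, MeasurableSet C := fun C hC => hC.measurableSet
  have hnull : {C | IsGenCircle C}.Pairwise fun C D => ν (C ∩ D) = 0 :=
    fun C hC D hD hCD => (hC.inter_countable hD hCD).measure_zero ν
  have hback (hpos : 0 < s) : Q.Nonempty ∧ Q.Finite ∧
      ∀ C ∈ Q, ∀ i, moeb (↑(g i) : Matrix (Fin 2) (Fin 2) ℂ) ⁻¹' C ∈ Q := by
    rw [hs'] at hpos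
    rw [hQ']
    exact ⟨maxMassSets_nonempty hmeas hnull hpos, maxMassSets_finite hmeas hnull hpos,
      fun C hC i => preimage_mem_maxMassSets (fun j => measurable_moeb _)
        (fun j => (ENNReal.ofReal_pos.2 (hp j)).ne') hw1 hstat hmeas
        (fun j C hC => hC.preimage_moeb (hdet j)) hC i⟩
  refine ⟨hback, fun hno C hC => ?_⟩
  by_contra hνC
  obtain ⟨hQne, hQfin, hQpre⟩ :=
    hback ((pos_iff_ne_zero.2 hνC).trans_le (hs' ▸ le_sSup ⟨C, hC, rfl⟩))
  exact hno ⟨Q, hQfin, hQne, fun D hD => (hQ ▸ hD).1, fun i D hD =>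
    hQfin.image_mem_of_preimage_mem (moeb_surjective (hdet i)) (fun E hE => hQpre E hE i) hD⟩

/-- If ν is a nonatomic stationary measure on the Riemann sphere for a finite family of
Möbius transformations and the supremum s of ν-masses of generalized circles is positive,
then the set Q of generalized circles of mass s is nonempty, finite and backward invariant;
in particular, if no finite nonempty forward-invariant family of generalized circles
exists, then every generalized circle is ν-null. -/
theorem stmt_17 {Λ : Type} [Fintype Λ] [Nonempty Λ]
    (g : Λ → Matrix.SpecialLinearGroup (Fin 2) ℂ)
    (p : Λ → ℝ) (hp : ∀ i, 0 < p i) (hp1 : ∑ i, p i = 1)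
    (ν : Measure (OnePoint ℂ)) [IsProbabilityMeasure ν]
    (hna : ∀ x : OnePoint ℂ, ν {x} = 0)
    (hstat : ν = ∑ i, ENNReal.ofReal (p i) •
      Measure.map (moeb (↑(g i) : Matrix (Fin 2) (Fin 2) ℂ)) ν) :
    ∀ (s : ℝ≥0∞) (Q : Set (Set (OnePoint ℂ))),
      s = sSup {r : ℝ≥0∞ | ∃ C : Set (OnePoint ℂ), IsGenCircle C ∧ r = ν C} →
      Q = {C | IsGenCircle C ∧ ν C = s} →
      ((0 < s → Q.Nonempty ∧ Q.Finite ∧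
        ∀ C ∈ Q, ∀ i : Λ, (moeb (↑(g i) : Matrix (Fin 2) (Fin 2) ℂ)) ⁻¹' C ∈ Q) ∧
      ((¬ ∃ Q' : Set (Set (OnePoint ℂ)), Q'.Finite ∧ Q'.Nonempty ∧
          (∀ C ∈ Q', IsGenCircle C) ∧
          ∀ i : Λ, ∀ C ∈ Q', (moeb (↑(g i) : Matrix (Fin 2) (Fin 2) ℂ)) '' C ∈ Q') →
        ∀ C : Set (OnePoint ℂ), IsGenCircle C → ν C = 0)) :=
  stmt_17_general g p hp hp1 ν hna hstat
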